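/- The construction R ↦ Δ_R is a bijection from context structures on an infinite set V to structure categories, where for a fixed injection c : ℕ → V, Δ_R consists of functions θ : [m] → [n] with (c₁⋯cₙ) R (c_{θ(1)}⋯c_{θ(m)}); its inverse sends Δ to R_Δ, where c R_Δ v iff v = c_{θ(1)}⋯c_{θ(m)} for some θ in Δ with [n] the length of the context c. -/

import Mathlib

/-- The element of `Fin (∑ i, k i)` determined by block `p.1` and offset `p.2`. -/
def sigmaToFin {n : ℕ} {k : Fin n → ℕ} (p : (i : Fin n) × Fin (k i)) : Fin (∑ i, k i) :=
  ⟨(∑ j ∈ Finset.univ.filter fun j => j < p.1, k j) + p.2.val, by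
    have hsub := Finset.sum_le_sum_of_subset (f := k)
      (Finset.subset_univ (insert p.1 (Finset.univ.filter fun j => j < p.1)))
    rw [Finset.sum_insert (by simp)] at hsub
    have := p.2.isLt
    omega⟩

/-- Decomposition of an element of `Fin (∑ i, k i)` into a block index and an offset. -/
def finToSigma {n : ℕ} {k : Fin n → ℕ} (p : Fin (∑ i, k i)) : (i : Fin n) × Fin (k i) :=
  (List.ofFn fun i => List.ofFn fun x : Fin (k i) =>
    (⟨i, x⟩ : (i : Fin n) × Fin (k i))).flatten.get (Fin.cast (by simp [Function.comp_def, List.sum_ofFn]) p)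

/-- Coproduct of two functions between finite ordinals, acting blockwise. -/
def coprodMap {m₁ n₁ m₂ n₂ : ℕ} (f : Fin m₁ → Fin n₁) (g : Fin m₂ → Fin n₂) :
    Fin (m₁ + m₂) → Fin (n₁ + n₂) :=
  finSumFinEquiv ∘ Sum.map f g ∘ finSumFinEquiv.symm

/-- The similarity component `θ'_{k₁,…,kₙ}` of `θ : [m] → [n]`. -/
def simComp {m n : ℕ} (θ : Fin m → Fin n) (k : Fin n → ℕ) :
    Fin (∑ i, k (θ i)) → Fin (∑ j, k j) :=
  fun p => sigmaToFin ⟨θ (finToSigma p).1, (finToSigma p).2⟩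

/-- Cardinality of the fiber of `f` over `i`. -/
def fiberCard {m n : ℕ} (f : Fin m → Fin n) (i : Fin n) : ℕ :=
  (Finset.univ.filter fun x => f x = i).card

/-- A structure category: a wide subcategory of `FinOrd` closed under coproducts of
morphisms and under similarity components. -/
structure IsStructCat (Δ : ∀ m n : ℕ, Set (Fin m → Fin n)) : Prop where
  id_mem : ∀ n, id ∈ Δ n n
  comp_mem : ∀ {k m n : ℕ} (f : Fin k → Fin m) (g : Fin m → Fin n),
    f ∈ Δ k m → g ∈ Δ m n → g ∘ f ∈ Δ k n
  coprod_mem : ∀ {m₁ n₁ m₂ n₂ : ℕ} (f : Fin m₁ → Fin n₁) (g : Fin m₂ → Fin n₂),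
    f ∈ Δ m₁ n₁ → g ∈ Δ m₂ n₂ → coprodMap f g ∈ Δ (m₁ + m₂) (n₁ + n₂)
  sim_mem : ∀ {m n : ℕ} (θ : Fin m → Fin n), θ ∈ Δ m n → ∀ k : Fin n → ℕ,
    simComp θ k ∈ Δ (∑ i, k (θ i)) (∑ j, k j)

/-- A structure monoid: a subset of ℕ containing 1 and closed under `I`-indexed sums. -/
def IsStructMonoid (I : Set ℕ) : Prop :=
  1 ∈ I ∧ ∀ k ∈ I, ∀ a : Fin k → ℕ, (∀ i, a i ∈ I) → (∑ i, a i) ∈ I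

/-- `Δ^I` : functions all of whose fibers have cardinality in `I`. -/
def DeltaUp (I : Set ℕ) : ∀ m n : ℕ, Set (Fin m → Fin n) :=
  fun _ _ => {f | ∀ i, fiberCard f i ∈ I}

/-- The unique map `[n] → [1]`. -/
def bang (n : ℕ) : Fin n → Fin 1 := fun _ => 0

/-- `Δ_I` : the smallest structure category containing the maps `[n] → [1]` for `n ∈ I`. -/
def GenDelta (I : Set ℕ) : ∀ m n : ℕ, Set (Fin m → Fin n) := fun m n =>
  {f | ∀ Δ : ∀ m n : ℕ, Set (Fin m → Fin n), IsStructCat Δ →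
    (∀ k ∈ I, bang k ∈ Δ k 1) → f ∈ Δ m n}
/-- A context structure on `V`: a relation between contexts (repetition-free words) and
words, reflexive on contexts, contained in letter-expression, closed under composition of
context assignments, and stable under substitution. -/
structure IsCtxStruct {V : Type} (R : List V → List V → Prop) : Prop where
  dom_nodup : ∀ {c v : List V}, R c v → c.Nodup
  refl : ∀ c : List V, c.Nodup → R c c
  mem : ∀ {c v : List V}, R c v → ∀ x ∈ v, x ∈ c
  compose : ∀ {c : List V} (ps : List (List V × List V)),
    R c (ps.map Prod.fst).flatten → (∀ p ∈ ps, R p.1 p.2) →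
    R c (ps.map Prod.snd).flatten
  subst : ∀ {c v d : List V} (s : V → List V),
    R c v → R d (c.map s).flatten → R d (v.map s).flatten

/-- A context structure is modelable if every context of a concatenation of words refines
into contexts of the individual words. -/
def Modelable {V : Type} (R : List V → List V → Prop) : Prop :=
  ∀ (c : List V) (vs : List (List V)), R c vs.flatten →
    ∃ cs : List (List V), R c cs.flatten ∧ List.Forall₂ R cs vs

/-- The structure category `Δ_R` associated to a context structure `R` (relative to a fixed
injection `e : ℕ → V`): `θ : [m] → [n]` lies in `Δ_R` iff `(c₁⋯cₙ) R (c_{θ(1)}⋯c_{θ(m)})`. -/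
def toCat {V : Type} (e : ℕ → V) (R : List V → List V → Prop) :
    ∀ m n : ℕ, Set (Fin m → Fin n) := fun m n =>
  {θ | R (List.ofFn fun i : Fin n => e i.1) (List.ofFn fun i : Fin m => e (θ i).1)}

/-- The context structure `R_Δ` associated to a structure category `Δ`: `c R_Δ v` iff `c`
is a context and `v = c_{θ(1)}⋯c_{θ(m)}` for some `θ` in `Δ`. -/
def toCtx {V : Type} (Δ : ∀ m n : ℕ, Set (Fin m → Fin n)) :
    List V → List V → Prop := fun c v =>
  c.Nodup ∧ ∃ θ : Fin v.length → Fin c.length,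
    θ ∈ Δ v.length c.length ∧ v = List.ofFn fun i => c.get (θ i)

-- === auxiliary layer ===
def off {n : ℕ} (k : Fin n → ℕ) (i : Fin n) : ℕ :=
  ∑ j ∈ Finset.univ.filter fun j => j < i, k j

lemma sigmaToFin_val {n : ℕ} {k : Fin n → ℕ} (p : (i : Fin n) × Fin (k i)) :
    (sigmaToFin p).val = off k p.1 + p.2.val := rfl

lemma off_zero {n : ℕ} (k : Fin (n + 1) → ℕ) : off k 0 = 0 := by
  unfold off
  convert Finset.sum_empty
  ext j
  simp [Fin.not_lt_zero]

lemma off_succ {n : ℕ} (k : Fin (n + 1) → ℕ) (i : Fin n) :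
    off k i.succ = k 0 + off (k ∘ Fin.succ) i := by
  unfold off
  rw [Finset.sum_filter, Finset.sum_filter, Fin.sum_univ_succ]
  simp [Fin.succ_pos, Fin.succ_lt_succ_iff]

lemma off_add_le {n : ℕ} (k : Fin n → ℕ) {i i' : Fin n} (h : i < i') :
    off k i + k i ≤ off k i' := by
  have hs : insert i (Finset.univ.filter fun j => j < i) ⊆ Finset.univ.filter fun j => j < i' := by
    intro j hj
    simp only [Finset.mem_insert, Finset.mem_filter, Finset.mem_univ, true_and] at hj ⊢
    rcases hj with rfl | hj
    · exact h
    · exact lt_trans hj h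
  have h2 := Finset.sum_le_sum_of_subset (f := k) hs
  rw [Finset.sum_insert (by simp)] at h2
  unfold off
  omega

lemma ofFn_range' (m a : ℕ) : List.ofFn (fun x : Fin m => a + x.val) = List.range' a m := by
  apply List.ext_getElem
  · simp
  · intro q h1 h2
    simp [List.getElem_ofFn, List.getElem_range']

lemma flatten_blocks : ∀ (n : ℕ) (k : Fin n → ℕ) (a : ℕ),
    (List.ofFn fun i => List.range' (a + off k i) (k i)).flatten = List.range' a (∑ i, k i)
  | 0, k, a => by simp
  | (n+1), k, a => by
    rw [List.ofFn_succ, List.flatten_cons, off_zero]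
    have hfun : (fun i : Fin n => List.range' (a + off k i.succ) (k i.succ))
        = fun i => List.range' ((a + k 0) + off (k ∘ Fin.succ) i) ((k ∘ Fin.succ) i) := by
      funext i
      rw [off_succ, ← Nat.add_assoc]; rfl
    rw [show (fun i : Fin n => List.range' (a + off k (Fin.succ i)) (k (Fin.succ i))) = fun i => List.range' ((a + k 0) + off (k ∘ Fin.succ) i) ((k ∘ Fin.succ) i) from hfun,
      flatten_blocks n (k ∘ Fin.succ) (a + k 0)]
    have h2 := List.range'_append (s := a) (m := k 0) (n := ∑ i, (k ∘ Fin.succ) i) (step := 1)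
    simp only [one_mul, Nat.add_zero] at h2 ⊢
    rw [Fin.sum_univ_succ]
    exact h2

lemma sigmaToFin_finToSigma {n : ℕ} {k : Fin n → ℕ} (p : Fin (∑ i, k i)) :
    sigmaToFin (finToSigma p) = p := by
  apply Fin.ext
  have hmap : List.map (fun s : (i : Fin n) × Fin (k i) => (sigmaToFin s).val)
      ((List.ofFn fun i => List.ofFn fun x : Fin (k i) =>
        (⟨i, x⟩ : (i : Fin n) × Fin (k i))).flatten)
      = List.range' 0 (∑ i, k i) := by
    rw [List.map_flatten, List.map_ofFn]
    have hfun : ((List.map fun s : (i : Fin n) × Fin (k i) => (sigmaToFin s).val) ∘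
        fun i => List.ofFn fun x : Fin (k i) => (⟨i, x⟩ : (i : Fin n) × Fin (k i)))
        = fun i => List.range' (0 + off k i) (k i) := by
      funext i
      simp only [Function.comp, List.map_ofFn]
      have : ((fun s : (i : Fin n) × Fin (k i) => (sigmaToFin s).val) ∘
          fun x : Fin (k i) => (⟨i, x⟩ : (i : Fin n) × Fin (k i)))
          = fun x : Fin (k i) => (0 + off k i) + x.val := by
        funext x
        simp [sigmaToFin_val]
      rw [this, ofFn_range']
    rw [hfun, flatten_blocks]
  have hlen : p.val < ((List.ofFn fun i => List.ofFn fun x : Fin (k i) =>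
      (⟨i, x⟩ : (i : Fin n) × Fin (k i))).flatten).length := by
    have := p.isLt
    simp only [List.length_flatten, List.map_ofFn, Function.comp_def, List.length_ofFn,
      List.sum_ofFn]
    omega
  have hlen2 : p.val < (List.map (fun s : (i : Fin n) × Fin (k i) => (sigmaToFin s).val)
      ((List.ofFn fun i => List.ofFn fun x : Fin (k i) =>
        (⟨i, x⟩ : (i : Fin n) × Fin (k i))).flatten)).length := by
    rw [List.length_map]; exact hlen
  have key := (List.getElem_map (fun s : (i : Fin n) × Fin (k i) => (sigmaToFin s).val)
    (l := (List.ofFn fun i => List.ofFn fun x : Fin (k i) =>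
      (⟨i, x⟩ : (i : Fin n) × Fin (k i))).flatten) (i := p.val) (h := hlen2)).symm
  have key2 := key.trans (List.getElem_of_eq hmap hlen2)
  rw [List.getElem_range'] at key2
  unfold finToSigma
  rw [List.get_eq_getElem]
  simp only [Fin.coe_cast]
  rw [key2]
  omega

lemma sigmaToFin_injective {n : ℕ} {k : Fin n → ℕ} :
    Function.Injective (sigmaToFin (k := k)) := by
  rintro ⟨i, x⟩ ⟨i', x'⟩ h
  have hv : off k i + x.val = off k i' + x'.val := by
    have := congrArg Fin.val h
    simpa [sigmaToFin_val] using this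
  have hii : i = i' := by
    rcases lt_trichotomy i i' with hlt | heq | hgt
    · exact absurd hv (by have := off_add_le k hlt; have := x.isLt; have := x'.isLt; omega)
    · exact heq
    · exact absurd hv (by have := off_add_le k hgt; have := x.isLt; have := x'.isLt; omega)
  subst hii
  have : x = x' := Fin.ext (by omega)
  rw [this]

lemma finToSigma_sigmaToFin {n : ℕ} {k : Fin n → ℕ} (q : (i : Fin n) × Fin (k i)) :
    finToSigma (sigmaToFin q) = q :=
  sigmaToFin_injective (by rw [sigmaToFin_finToSigma])

lemma finToSigma_eq {n : ℕ} {k : Fin n → ℕ} {p : Fin (∑ i, k i)} {i : Fin n} {x : Fin (k i)}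
    (h : p.val = off k i + x.val) : finToSigma p = ⟨i, x⟩ :=
  sigmaToFin_injective (by rw [sigmaToFin_finToSigma]; exact (Fin.ext (by rw [sigmaToFin_val]; exact h)))

lemma finToSigma_val {n : ℕ} {k : Fin n → ℕ} (p : Fin (∑ i, k i)) :
    off k (finToSigma p).1 + (finToSigma p).2.val = p.val := by
  conv_rhs => rw [← sigmaToFin_finToSigma p]
  rfl

/-- master flatten lemma -/
lemma flatten_ofFn_eq {α : Type*} {n : ℕ} (g : Fin n → List α) :
    (List.ofFn g).flatten
      = List.ofFn (fun p : Fin (∑ l, (g l).length) => (g (finToSigma p).1).get (finToSigma p).2) := by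
  set F : ((l : Fin n) × Fin ((g l).length)) → α := fun s => (g s.1).get s.2 with hF
  have h1 : List.ofFn (fun p : Fin (∑ l, (g l).length) => (g (finToSigma p).1).get (finToSigma p).2)
      = List.map F ((List.ofFn fun i => List.ofFn fun x : Fin ((g i).length) =>
        (⟨i, x⟩ : (l : Fin n) × Fin ((g l).length))).flatten) := by
    apply List.ext_getElem
    · simp [List.length_flatten, List.map_ofFn, Function.comp_def, List.sum_ofFn]
    · intro q h1 h2
      rw [List.getElem_ofFn, List.getElem_map]
      unfold finToSigma
      congr 1
  rw [h1, List.map_flatten, List.map_ofFn]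
  congr 1
  congr 1
  funext i
  simp only [Function.comp, List.map_ofFn]
  have : (F ∘ fun x : Fin ((g i).length) => (⟨i, x⟩ : (l : Fin n) × Fin ((g l).length)))
      = (g i).get := by funext x; rfl
  rw [this, List.ofFn_get]

lemma ofFn_ext {α : Type*} {m n : ℕ} (h : m = n) (f : Fin m → α) (g : Fin n → α)
    (H : ∀ (q : ℕ) (h1 : q < m) (h2 : q < n), f ⟨q, h1⟩ = g ⟨q, h2⟩) :
    List.ofFn f = List.ofFn g := by
  subst h
  congr 1
  funext i
  have := H i.val i.isLt i.isLt
  simpa using this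

lemma memT {Δ : ∀ m n : ℕ, Set (Fin m → Fin n)} {m n m' n' : ℕ} (hm : m = m') (hn : n = n')
    {θ : Fin m → Fin n} {θ' : Fin m' → Fin n'}
    (H : ∀ (q : ℕ) (h1 : q < m) (h2 : q < m'), (θ ⟨q, h1⟩).val = (θ' ⟨q, h2⟩).val)
    (hθ : θ ∈ Δ m n) : θ' ∈ Δ m' n' := by
  subst hm; subst hn
  have : θ = θ' := funext fun i => Fin.ext (by simpa using H i.val i.isLt i.isLt)
  exact this ▸ hθ

lemma entryExt {α : Type*} {L : List α} {m : ℕ} {F : Fin m → α} (hL : L = List.ofFn F)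
    (q : ℕ) (h1 : q < L.length) (h2 : q < m) : L[q] = F ⟨q, h2⟩ := by
  subst hL
  simp [List.getElem_ofFn]

lemma coprodMap_left {m₁ n₁ m₂ n₂ : ℕ} (f : Fin m₁ → Fin n₁) (g : Fin m₂ → Fin n₂)
    (x : Fin m₁) : coprodMap f g (Fin.castAdd m₂ x) = Fin.castAdd n₂ (f x) := by
  unfold coprodMap
  simp [finSumFinEquiv_symm_apply_castAdd]

lemma coprodMap_right {m₁ n₁ m₂ n₂ : ℕ} (f : Fin m₁ → Fin n₁) (g : Fin m₂ → Fin n₂)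
    (y : Fin m₂) : coprodMap f g (Fin.natAdd m₁ y) = Fin.natAdd n₁ (g y) := by
  unfold coprodMap
  simp [finSumFinEquiv_symm_apply_natAdd]

/-- `n`-ary blockwise coproduct. -/
def bigCoprod {n : ℕ} {a b : Fin n → ℕ} (f : ∀ l, Fin (a l) → Fin (b l)) :
    Fin (∑ l, a l) → Fin (∑ l, b l) :=
  fun p => sigmaToFin ⟨(finToSigma p).1, f _ ((finToSigma p).2)⟩

lemma bigCoprod_mem {Δ : ∀ m n : ℕ, Set (Fin m → Fin n)} (hΔ : IsStructCat Δ) :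
    ∀ {n : ℕ} {a b : Fin n → ℕ} (f : ∀ l, Fin (a l) → Fin (b l)),
    (∀ l, f l ∈ Δ (a l) (b l)) → bigCoprod f ∈ Δ (∑ l, a l) (∑ l, b l)
  | 0, a, b, f, hf => by
    refine memT (Δ := Δ) (by simp) (by simp) (fun q h1 h2 => by omega) (hΔ.id_mem 0)
  | (n+1), a, b, f, hf => by
    have ih := bigCoprod_mem hΔ (fun l : Fin n => f l.succ)
      (fun l => hf l.succ)
    have hc := hΔ.coprod_mem (f 0) (bigCoprod fun l : Fin n => f l.succ) (hf 0) ih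
    refine memT (Δ := Δ) (Fin.sum_univ_succ a).symm (Fin.sum_univ_succ b).symm ?_ hc
    intro q h1 h2
    by_cases hq : q < a 0
    · have hcast : (⟨q, h1⟩ : Fin (a 0 + ∑ l : Fin n, a l.succ))
          = Fin.castAdd _ (⟨q, hq⟩ : Fin (a 0)) := Fin.ext rfl
      rw [hcast, coprodMap_left]
      have hfts : finToSigma (⟨q, h2⟩ : Fin (∑ l : Fin (n+1), a l))
          = ⟨0, ⟨q, hq⟩⟩ := finToSigma_eq (by simp [off_zero])
      show (Fin.castAdd _ (f 0 ⟨q, hq⟩)).val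
        = (sigmaToFin ⟨(finToSigma (⟨q, h2⟩ : Fin (∑ l : Fin (n+1), a l))).1,
            f _ ((finToSigma (⟨q, h2⟩ : Fin (∑ l : Fin (n+1), a l))).2)⟩).val
      rw [hfts]
      simp [sigmaToFin_val, off_zero]
    · have hy : q - a 0 < ∑ l : Fin n, a l.succ := by omega
      set y : Fin (∑ l : Fin n, a l.succ) := ⟨q - a 0, hy⟩ with hydef
      have hcast : (⟨q, h1⟩ : Fin (a 0 + ∑ l : Fin n, a l.succ)) = Fin.natAdd (a 0) y :=
        Fin.ext (by simp [hydef]; omega)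
      rw [hcast, coprodMap_right]
      have hyval := finToSigma_val y
      have hfts : finToSigma (⟨q, h2⟩ : Fin (∑ l : Fin (n+1), a l))
          = ⟨(finToSigma y).1.succ, (finToSigma y).2⟩ := by
        apply finToSigma_eq
        show q = off a (finToSigma y).1.succ + ((finToSigma y).2).val
        rw [off_succ]
        have : off (a ∘ Fin.succ) (finToSigma y).1 + ((finToSigma y).2).val = q - a 0 := hyval
        omega
      show (Fin.natAdd (b 0) (bigCoprod (fun l : Fin n => f l.succ) y)).val
        = (bigCoprod f (⟨q, h2⟩ : Fin (∑ l : Fin (n+1), a l))).val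
      have lhs : (Fin.natAdd (b 0) (bigCoprod (fun l : Fin n => f l.succ) y)).val
          = b 0 + (off (fun l : Fin n => b l.succ) (finToSigma y).1
              + (f (finToSigma y).1.succ (finToSigma y).2).val) := rfl
      have rhs : (bigCoprod f (⟨q, h2⟩ : Fin (∑ l : Fin (n+1), a l))).val
          = off b ((finToSigma y).1.succ) + (f (finToSigma y).1.succ (finToSigma y).2).val := by
        show (sigmaToFin _).val = _
        rw [show (⟨(finToSigma (⟨q, h2⟩ : Fin (∑ l : Fin (n+1), a l))).1,
            f _ ((finToSigma (⟨q, h2⟩ : Fin (∑ l : Fin (n+1), a l))).2)⟩ :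
              (i : Fin (n+1)) × Fin (b i))
          = ⟨(finToSigma y).1.succ, f (finToSigma y).1.succ (finToSigma y).2⟩ from by rw [hfts]]
        rfl
      rw [lhs, rhs, off_succ]
      have hoff : off (fun l : Fin n => b l.succ) (finToSigma y).1
          = off (b ∘ Fin.succ) (finToSigma y).1 := rfl
      omega

lemma ofFn_inj {α : Type*} {m n : ℕ} {f : Fin m → α} {g : Fin n → α}
    (h : List.ofFn f = List.ofFn g) (q : ℕ) (h1 : q < m) (h2 : q < n) :
    f ⟨q, h1⟩ = g ⟨q, h2⟩ := by
  have e1 : (List.ofFn f)[q]'(by simpa using h1) = f ⟨q, h1⟩ := by simp [List.getElem_ofFn]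
  have e2 : (List.ofFn g)[q]'(by simpa using h2) = g ⟨q, h2⟩ := by simp [List.getElem_ofFn]
  rw [← e1, ← e2]
  exact List.getElem_of_eq h _

lemma ctxStruct_of_cat {V : Type} (Δ : ∀ m n : ℕ, Set (Fin m → Fin n)) (hΔ : IsStructCat Δ) :
    IsCtxStruct (toCtx (V := V) Δ) := by
  constructor
  · exact fun h => h.1
  · intro c hc
    exact ⟨hc, fun i => i, hΔ.id_mem c.length, (List.ofFn_get c).symm⟩
  · rintro c v ⟨hn, θ, hθ, hveq⟩ x hx
    rw [hveq, List.mem_ofFn] at hx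
    obtain ⟨i, rfl⟩ := hx
    exact List.get_mem c (θ i)
  · -- compose
    rintro c ps ⟨hnd, θ, hθ, hword⟩ hall
    set g : Fin ps.length → List V := fun l => (ps.get l).1 with hgdef
    set h : Fin ps.length → List V := fun l => (ps.get l).2 with hhdef
    have hg : ps.map Prod.fst = List.ofFn g := by
      conv_lhs => rw [← List.ofFn_get ps]
      rw [List.map_ofFn]; rfl
    have hh : ps.map Prod.snd = List.ofFn h := by
      conv_lhs => rw [← List.ofFn_get ps]
      rw [List.map_ofFn]; rfl
    have H : ∀ l : Fin ps.length, ∃ φ : Fin ((h l).length) → Fin ((g l).length),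
        φ ∈ Δ (h l).length (g l).length ∧ h l = List.ofFn fun i => (g l).get (φ i) :=
      fun l => (hall (ps.get l) (List.get_mem ps l)).2
    choose φ hφ hword2 using H
    have key1 := flatten_ofFn_eq g
    have key2 := flatten_ofFn_eq h
    have hMlen : (ps.map Prod.fst).flatten.length = ∑ l, (g l).length := by
      rw [hg, key1]; exact List.length_ofFn
    have hVlen : (ps.map Prod.snd).flatten.length = ∑ l, (h l).length := by
      rw [hh, key2]; exact List.length_ofFn
    have hcF : ∀ (q : ℕ) (h1 : q < (ps.map Prod.fst).flatten.length)
        (h2 : q < ∑ l, (g l).length),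
        c.get (θ ⟨q, h1⟩) = (g (finToSigma (⟨q, h2⟩ :
          Fin (∑ l, (g l).length))).1).get (finToSigma (⟨q, h2⟩ :
          Fin (∑ l, (g l).length))).2 := by
      intro q h1 h2
      have heq : (List.ofFn fun i => c.get (θ i))
          = List.ofFn (fun p : Fin (∑ l, (g l).length) =>
              (g (finToSigma p).1).get (finToSigma p).2) := by
        rw [← hword, hg, key1]
      exact ofFn_inj heq q h1 h2
    have hθ'mem : (fun q => θ (Fin.cast hMlen.symm q)) ∈ Δ (∑ l, (g l).length) c.length :=
      memT hMlen rfl (fun q h1 h2 => rfl) hθ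
    refine ⟨hnd, fun i => θ (Fin.cast hMlen.symm (bigCoprod φ (Fin.cast hVlen i))), ?_, ?_⟩
    · have hcomp := hΔ.comp_mem _ _ (bigCoprod_mem hΔ φ hφ) hθ'mem
      refine memT hVlen.symm rfl ?_ hcomp
      intro q h1 h2
      rfl
    · conv_lhs => rw [hh, key2]
      apply ofFn_ext hVlen.symm
      intro q h1 h2
      show (h (finToSigma (⟨q, h1⟩ : Fin (∑ l, (h l).length))).1).get
          (finToSigma (⟨q, h1⟩ : Fin (∑ l, (h l).length))).2
        = c.get (θ (Fin.cast hMlen.symm (bigCoprod φ (Fin.cast hVlen ⟨q, h2⟩))))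
      have hu2 : (bigCoprod φ (Fin.cast hVlen ⟨q, h2⟩)).val < ∑ l, (g l).length :=
        (bigCoprod φ (Fin.cast hVlen ⟨q, h2⟩)).isLt
      have hu1 : (bigCoprod φ (Fin.cast hVlen ⟨q, h2⟩)).val
          < (ps.map Prod.fst).flatten.length := by rw [hMlen]; exact hu2
      have hrhs : c.get (θ (Fin.cast hMlen.symm (bigCoprod φ (Fin.cast hVlen ⟨q, h2⟩))))
          = c.get (θ ⟨(bigCoprod φ (Fin.cast hVlen ⟨q, h2⟩)).val, hu1⟩) := rfl
      rw [hrhs, hcF _ hu1 hu2]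
      have hQ : finToSigma (⟨(bigCoprod φ (Fin.cast hVlen ⟨q, h2⟩)).val, hu2⟩ :
            Fin (∑ l, (g l).length))
          = ⟨(finToSigma (⟨q, h1⟩ : Fin (∑ l, (h l).length))).1,
              φ _ (finToSigma (⟨q, h1⟩ : Fin (∑ l, (h l).length))).2⟩ := by
        rw [show (⟨(bigCoprod φ (Fin.cast hVlen ⟨q, h2⟩)).val, hu2⟩ :
            Fin (∑ l, (g l).length)) = bigCoprod φ (Fin.cast hVlen ⟨q, h2⟩) from rfl]
        show finToSigma (sigmaToFin _) = _
        rw [finToSigma_sigmaToFin]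
        rfl
      rw [hQ]
      have := entryExt (hword2 (finToSigma (⟨q, h1⟩ : Fin (∑ l, (h l).length))).1)
        (finToSigma (⟨q, h1⟩ : Fin (∑ l, (h l).length))).2.val
        (finToSigma (⟨q, h1⟩ : Fin (∑ l, (h l).length))).2.isLt
        (finToSigma (⟨q, h1⟩ : Fin (∑ l, (h l).length))).2.isLt
      exact (List.get_eq_getElem).trans this
  · -- subst
    rintro c v d s ⟨hnc, θ₁, hθ₁, hv⟩ ⟨hnd, θ₂, hθ₂, hw⟩
    set g2 : Fin c.length → List V := fun j => s (c.get j) with hg2def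
    have hcs : c.map s = List.ofFn g2 := by
      conv_lhs => rw [← List.ofFn_get c]
      rw [List.map_ofFn]; rfl
    have hvs : v.map s = List.ofFn (fun i : Fin v.length => g2 (θ₁ i)) := by
      conv_lhs => rw [hv]
      rw [List.map_ofFn]; rfl
    have keyc := flatten_ofFn_eq g2
    have keyv := flatten_ofFn_eq (fun i : Fin v.length => g2 (θ₁ i))
    have hlen2 : (c.map s).flatten.length = ∑ j, (g2 j).length := by
      rw [hcs, keyc]; exact List.length_ofFn
    have hlen1 : (v.map s).flatten.length = ∑ i, (g2 (θ₁ i)).length := by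
      rw [hvs, keyv]; exact List.length_ofFn
    have hcF : ∀ (q : ℕ) (h1 : q < (c.map s).flatten.length) (h2 : q < ∑ j, (g2 j).length),
        d.get (θ₂ ⟨q, h1⟩) = (g2 (finToSigma (⟨q, h2⟩ : Fin (∑ j, (g2 j).length))).1).get
          (finToSigma (⟨q, h2⟩ : Fin (∑ j, (g2 j).length))).2 := by
      intro q h1 h2
      have heq : (List.ofFn fun i => d.get (θ₂ i))
          = List.ofFn (fun p : Fin (∑ j, (g2 j).length) =>
              (g2 (finToSigma p).1).get (finToSigma p).2) := by
        rw [← hw, hcs]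
        exact keyc
      exact ofFn_inj heq q h1 h2
    have hsim := hΔ.sim_mem θ₁ hθ₁ (fun j => (g2 j).length)
    refine ⟨hnd, fun i => θ₂ (Fin.cast hlen2.symm
      (simComp θ₁ (fun j => (g2 j).length) (Fin.cast hlen1 i))), ?_, ?_⟩
    · have hθ₂'mem : (fun q => θ₂ (Fin.cast hlen2.symm q)) ∈ Δ (∑ j, (g2 j).length) d.length :=
        memT hlen2 rfl (fun q h1 h2 => rfl) hθ₂
      have hcomp := hΔ.comp_mem _ _ hsim hθ₂'mem
      refine memT hlen1.symm rfl ?_ hcomp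
      intro q h1 h2
      rfl
    · conv_lhs => rw [hvs, keyv]
      apply ofFn_ext hlen1.symm
      intro q h1 h2
      show (g2 (θ₁ (finToSigma (⟨q, h1⟩ : Fin (∑ i, (g2 (θ₁ i)).length))).1)).get
          (finToSigma (⟨q, h1⟩ : Fin (∑ i, (g2 (θ₁ i)).length))).2
        = d.get (θ₂ (Fin.cast hlen2.symm
            (simComp θ₁ (fun j => (g2 j).length) (Fin.cast hlen1 ⟨q, h2⟩))))
      have hu2 : (simComp θ₁ (fun j => (g2 j).length) (Fin.cast hlen1 ⟨q, h2⟩)).val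
          < ∑ j, (g2 j).length :=
        (simComp θ₁ (fun j => (g2 j).length) (Fin.cast hlen1 ⟨q, h2⟩)).isLt
      have hu1 : (simComp θ₁ (fun j => (g2 j).length) (Fin.cast hlen1 ⟨q, h2⟩)).val
          < (c.map s).flatten.length := by rw [hlen2]; exact hu2
      have hrhs : d.get (θ₂ (Fin.cast hlen2.symm
            (simComp θ₁ (fun j => (g2 j).length) (Fin.cast hlen1 ⟨q, h2⟩))))
          = d.get (θ₂ ⟨(simComp θ₁ (fun j => (g2 j).length) (Fin.cast hlen1 ⟨q, h2⟩)).val,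
              hu1⟩) := rfl
      rw [hrhs, hcF _ hu1 hu2]
      have hQ : finToSigma (⟨(simComp θ₁ (fun j => (g2 j).length)
              (Fin.cast hlen1 ⟨q, h2⟩)).val, hu2⟩ : Fin (∑ j, (g2 j).length))
          = ⟨θ₁ (finToSigma (⟨q, h1⟩ : Fin (∑ i, (g2 (θ₁ i)).length))).1,
              (finToSigma (⟨q, h1⟩ : Fin (∑ i, (g2 (θ₁ i)).length))).2⟩ := by
        rw [show (⟨(simComp θ₁ (fun j => (g2 j).length)
              (Fin.cast hlen1 ⟨q, h2⟩)).val, hu2⟩ : Fin (∑ j, (g2 j).length))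
            = simComp θ₁ (fun j => (g2 j).length) (Fin.cast hlen1 ⟨q, h2⟩) from rfl]
        show finToSigma (sigmaToFin _) = _
        rw [finToSigma_sigmaToFin]
        rfl
      rw [hQ]

lemma toCat_toCtx {V : Type} (e : ℕ → V) (he : Function.Injective e)
    (Δ : ∀ m n : ℕ, Set (Fin m → Fin n)) (hΔ : IsStructCat Δ) :
    toCat e (toCtx (V := V) Δ) = Δ := by
  funext m n
  ext θ
  constructor
  · rintro ⟨hnd, φ, hφ, hword⟩
    refine memT (List.length_ofFn) (List.length_ofFn) ?_ hφ
    intro q h1 h2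
    have hq : q < m := by rw [← List.length_ofFn (f := fun i : Fin m => e (θ i).val)]; exact h1
    have h3 := ofFn_inj hword q hq h1
    have h4 : ((List.ofFn fun j : Fin n => e j.val).get (φ ⟨q, h1⟩))
        = e (φ ⟨q, h1⟩).val := by rw [List.get_ofFn]; rfl
    have h5 : (θ ⟨q, hq⟩).val = (φ ⟨q, h1⟩).val := he (h3.trans h4)
    have h6 : θ ⟨q, hq⟩ = θ ⟨q, h2⟩ := rfl
    rw [h6] at h5
    exact h5.symm
  · intro hθ
    refine ⟨List.nodup_ofFn.mpr (fun a b hab => Fin.ext (he hab)),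
      fun i => Fin.cast (List.length_ofFn).symm
        (θ (Fin.cast (List.length_ofFn (f := fun i : Fin m => e (θ i).val)) i)), ?_, ?_⟩
    · refine memT (List.length_ofFn).symm (List.length_ofFn).symm ?_ hθ
      intro q h1 h2
      rfl
    · apply ofFn_ext (List.length_ofFn).symm
      intro q h1 h2
      have h4 : ((List.ofFn fun j : Fin n => e j.val).get
          (Fin.cast (List.length_ofFn).symm
            (θ (Fin.cast (List.length_ofFn (f := fun i : Fin m => e (θ i).val)) ⟨q, h2⟩))))
          = e (θ ⟨q, h1⟩).val := by rw [List.get_ofFn]; rfl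
      exact h4.symm

open Classical in
noncomputable def mkSub {V : Type} (e : ℕ → V) (n : ℕ) (t : Fin n → List V) : V → List V :=
  fun x => if h : ∃ j : Fin n, x = e j.val then t h.choose else [x]

lemma mkSub_e {V : Type} {e : ℕ → V} (he : Function.Injective e) {n : ℕ}
    (t : Fin n → List V) (j : Fin n) : mkSub e n t (e j.val) = t j := by
  unfold mkSub
  have h : ∃ j' : Fin n, e j.val = e j'.val := ⟨j, rfl⟩
  rw [dif_pos h]
  congr 1
  exact (Fin.ext (he h.choose_spec)).symm

lemma flatten_singletons {α : Type*} : ∀ {n : ℕ} (F : Fin n → α),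
    (List.ofFn fun i => [F i]).flatten = List.ofFn F
  | 0, F => by simp
  | n+1, F => by
    rw [List.ofFn_succ, List.flatten_cons, flatten_singletons, List.ofFn_succ (f := F)]
    rfl

lemma std_nodup {V : Type} {e : ℕ → V} (he : Function.Injective e) (n : ℕ) :
    (List.ofFn fun i : Fin n => e i.val).Nodup :=
  List.nodup_ofFn.mpr fun a b hab => Fin.ext (he hab)

lemma map_std_mkSub {V : Type} {e : ℕ → V} (he : Function.Injective e) {n : ℕ}
    (t : Fin n → List V) :
    (List.ofFn fun i : Fin n => e i.val).map (mkSub e n t) = List.ofFn t := by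
  rw [List.map_ofFn]
  exact congrArg List.ofFn (funext fun j => mkSub_e he t j)

lemma finToSigma_congr {n : ℕ} {k k' : Fin n → ℕ} (hk : k = k') (q : ℕ)
    (h1 : q < ∑ i, k i) (h2 : q < ∑ i, k' i) :
    (finToSigma (⟨q, h1⟩ : Fin (∑ i, k i))).1 = (finToSigma (⟨q, h2⟩ : Fin (∑ i, k' i))).1 ∧
    ((finToSigma (⟨q, h1⟩ : Fin (∑ i, k i))).2 : ℕ)
      = ((finToSigma (⟨q, h2⟩ : Fin (∑ i, k' i))).2 : ℕ) := by
  subst hk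
  exact ⟨rfl, rfl⟩

lemma catStruct_of_ctx {V : Type} (e : ℕ → V) (he : Function.Injective e)
    (R : List V → List V → Prop) (hR : IsCtxStruct R) : IsStructCat (toCat e R) := by
  constructor
  · -- id
    intro n
    exact hR.refl _ (std_nodup he n)
  · -- comp
    intro k m n f g hf hg
    show R _ _
    have h1 : R (List.ofFn fun i : Fin n => e i.val)
        (((List.ofFn fun i : Fin m => e i.val).map
          (mkSub e m (fun j => [e (g j).val]))).flatten) := by
      rw [map_std_mkSub he, flatten_singletons]
      exact hg
    have h2 := hR.subst _ hf h1
    have h3 : ((List.ofFn fun i : Fin k => e (f i).val).map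
          (mkSub e m (fun j => [e (g j).val]))).flatten
        = List.ofFn fun i : Fin k => e (g (f i)).val := by
      rw [List.map_ofFn]
      have hc : (mkSub e m (fun j => [e (g j).val]) ∘ fun i : Fin k => e (f i).val)
          = fun i : Fin k => [e (g (f i)).val] := funext fun i => mkSub_e he _ (f i)
      rw [hc, flatten_singletons]
    rw [h3] at h2
    exact h2
  · -- coprod
    intro m₁ n₁ m₂ n₂ f g hf hg
    show R _ _
    have hB : R (List.ofFn fun i : Fin n₂ => e (n₁ + i.val))
        (List.ofFn fun i : Fin m₂ => e (n₁ + (g i).val)) := by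
      have h1 : R (List.ofFn fun i : Fin n₂ => e (n₁ + i.val))
          (((List.ofFn fun i : Fin n₂ => e i.val).map
            (mkSub e n₂ (fun j => [e (n₁ + j.val)]))).flatten) := by
        rw [map_std_mkSub he, flatten_singletons]
        exact hR.refl _ (List.nodup_ofFn.mpr fun a b hab => Fin.ext (by have := he hab; omega))
      have h2 := hR.subst _ hg h1
      have h3 : ((List.ofFn fun i : Fin m₂ => e (g i).val).map
            (mkSub e n₂ (fun j => [e (n₁ + j.val)]))).flatten
          = List.ofFn fun i : Fin m₂ => e (n₁ + (g i).val) := by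
        rw [List.map_ofFn]
        have hc : (mkSub e n₂ (fun j => [e (n₁ + j.val)]) ∘ fun i : Fin m₂ => e (g i).val)
            = fun i : Fin m₂ => [e (n₁ + (g i).val)] := funext fun i => mkSub_e he _ (g i)
        rw [hc, flatten_singletons]
      rw [h3] at h2
      exact h2
    have hsplit : (List.ofFn fun i : Fin (n₁ + n₂) => e i.val)
        = (List.ofFn fun i : Fin n₁ => e i.val)
          ++ (List.ofFn fun i : Fin n₂ => e (n₁ + i.val)) := by
      rw [List.ofFn_add]
      rfl
    have hcomp := hR.compose
      (c := List.ofFn fun i : Fin (n₁ + n₂) => e i.val)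
      [((List.ofFn fun i : Fin n₁ => e i.val), (List.ofFn fun i : Fin m₁ => e (f i).val)),
       ((List.ofFn fun i : Fin n₂ => e (n₁ + i.val)),
        (List.ofFn fun i : Fin m₂ => e (n₁ + (g i).val)))]
      (by
        simp only [List.map_cons, List.map_nil, List.flatten_cons, List.flatten_nil,
          List.append_nil]
        rw [← hsplit]
        exact hR.refl _ (std_nodup he _))
      (by
        intro p hp
        simp only [List.mem_cons, List.not_mem_nil, or_false] at hp
        rcases hp with rfl | rfl
        · exact hf
        · exact hB)
    simp only [List.map_cons, List.map_nil, List.flatten_cons, List.flatten_nil,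
      List.append_nil] at hcomp
    have hw : (List.ofFn fun i : Fin (m₁ + m₂) => e (coprodMap f g i).val)
        = (List.ofFn fun i : Fin m₁ => e (f i).val)
          ++ (List.ofFn fun i : Fin m₂ => e (n₁ + (g i).val)) := by
      rw [List.ofFn_add]
      congr 1
      · exact congrArg List.ofFn (funext fun i => by rw [show Fin.castLE (Nat.le_add_right m₁ m₂) i = Fin.castAdd m₂ i from rfl, coprodMap_left]; rfl)
      · exact congrArg List.ofFn (funext fun i => by rw [coprodMap_right]; rfl)
    show R _ (List.ofFn fun i : Fin (m₁ + m₂) => e (coprodMap f g i).val)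
    rw [hw]
    exact hcomp
  · -- sim
    intro m n θ hθ k
    show R _ _
    have hgk : (fun j : Fin n =>
        (List.ofFn fun x : Fin (k j) => e (off k j + x.val)).length) = k :=
      funext fun j => List.length_ofFn
    have hflat : ((List.ofFn fun i : Fin n => e i.val).map
          (mkSub e n (fun j => List.ofFn fun x : Fin (k j) => e (off k j + x.val)))).flatten
        = List.ofFn (fun p : Fin (∑ j, k j) => e p.val) := by
      rw [map_std_mkSub he, flatten_ofFn_eq]
      apply ofFn_ext (by rw [hgk])
      intro q h1 h2
      rw [List.get_ofFn]
      congr 1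
      have hfts : off (fun j : Fin n =>
            (List.ofFn fun x : Fin (k j) => e (off k j + x.val)).length)
            (finToSigma (⟨q, h1⟩ : Fin (∑ j, (List.ofFn fun x : Fin (k j) =>
              e (off k j + x.val)).length))).1
          + ((finToSigma (⟨q, h1⟩ : Fin (∑ j, (List.ofFn fun x : Fin (k j) =>
              e (off k j + x.val)).length))).2 : ℕ) = q := finToSigma_val _
      have hoff := congrArg (fun κ : Fin n → ℕ =>
        off κ (finToSigma (⟨q, h1⟩ : Fin (∑ j, (List.ofFn fun x : Fin (k j) =>
          e (off k j + x.val)).length))).1) hgk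
      simp only [Fin.coe_cast]
      omega
    have h1 : R (List.ofFn fun p : Fin (∑ j, k j) => e p.val)
        (((List.ofFn fun i : Fin n => e i.val).map
          (mkSub e n (fun j => List.ofFn fun x : Fin (k j) => e (off k j + x.val)))).flatten) := by
      rw [hflat]
      exact hR.refl _ (std_nodup he _)
    have h2 := hR.subst _ hθ h1
    have h3 : ((List.ofFn fun i : Fin m => e (θ i).val).map
          (mkSub e n (fun j => List.ofFn fun x : Fin (k j) => e (off k j + x.val)))).flatten
        = List.ofFn fun p : Fin (∑ i, k (θ i)) => e (simComp θ k p).val := by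
      rw [List.map_ofFn]
      have hc : (mkSub e n (fun j => List.ofFn fun x : Fin (k j) => e (off k j + x.val))
            ∘ fun i : Fin m => e (θ i).val)
          = fun i : Fin m => List.ofFn fun x : Fin (k (θ i)) => e (off k (θ i) + x.val) :=
        funext fun i => mkSub_e he _ (θ i)
      rw [hc, flatten_ofFn_eq]
      have hgk2 : (fun i : Fin m =>
          (List.ofFn fun x : Fin (k (θ i)) => e (off k (θ i) + x.val)).length)
          = fun i => k (θ i) := funext fun i => List.length_ofFn
      apply ofFn_ext (by rw [hgk2])
      intro q h1' h2'
      rw [List.get_ofFn]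
      obtain ⟨hc1, hc2⟩ := finToSigma_congr hgk2 q h1' h2'
      show e (off k (θ _) + _) = e (simComp θ k ⟨q, h2'⟩).val
      have hsv : (simComp θ k (⟨q, h2'⟩ : Fin (∑ i, k (θ i)))).val
          = off k (θ (finToSigma (⟨q, h2'⟩ : Fin (∑ i, k (θ i)))).1)
            + ((finToSigma (⟨q, h2'⟩ : Fin (∑ i, k (θ i)))).2 : ℕ) := rfl
      rw [hsv]
      congr 1
      have h5 := congrArg (fun j => off k (θ j)) hc1
      simp only [Fin.coe_cast]
      omega
    rw [h3] at h2
    exact h2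

lemma map_eq_ofFn {α β : Type*} (l : List α) (f : α → β) :
    l.map f = List.ofFn (fun j : Fin l.length => f (l.get j)) := by
  apply List.ext_getElem
  · simp
  · intro q h1 h2
    simp [List.getElem_ofFn]

lemma toCtx_toCat {V : Type} (e : ℕ → V) (he : Function.Injective e)
    (R : List V → List V → Prop) (hR : IsCtxStruct R) : toCtx (toCat e R) = R := by
  funext c v
  apply propext
  constructor
  · rintro ⟨hnd, θ, hθ, hword⟩
    have h1 : R c (((List.ofFn fun i : Fin c.length => e i.val).map
        (mkSub e c.length (fun j => [c.get j]))).flatten) := by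
      rw [map_std_mkSub he, flatten_singletons, List.ofFn_get]
      exact hR.refl c hnd
    have h2 := hR.subst _ hθ h1
    have h3 : ((List.ofFn fun i : Fin v.length => e (θ i).val).map
          (mkSub e c.length (fun j => [c.get j]))).flatten
        = List.ofFn fun i => c.get (θ i) := by
      rw [List.map_ofFn]
      have hc : (mkSub e c.length (fun j => [c.get j]) ∘ fun i : Fin v.length => e (θ i).val)
          = fun i : Fin v.length => [c.get (θ i)] := funext fun i => mkSub_e he _ (θ i)
      rw [hc, flatten_singletons]
    rw [h3] at h2
    rw [hword]
    exact h2
  · intro hcv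
    classical
    have hnd := hR.dom_nodup hcv
    refine ⟨hnd, fun i => ⟨c.idxOf (v.get i),
      List.idxOf_lt_length_iff.mpr (hR.mem hcv _ (List.get_mem v i))⟩, ?_, ?_⟩
    · show R _ _
      have h1 : R (List.ofFn fun i : Fin c.length => e i.val)
          ((c.map fun x => if _ : x ∈ c then [e (c.idxOf x)] else [x]).flatten) := by
        have hmap : (c.map fun x => if _ : x ∈ c then [e (c.idxOf x)] else [x])
            = List.ofFn fun j : Fin c.length => [e j.val] := by
          rw [map_eq_ofFn c]
          apply congrArg List.ofFn
          funext j
          rw [dif_pos (List.get_mem c j)]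
          rw [List.get_idxOf hnd]
        rw [hmap, flatten_singletons]
        exact hR.refl _ (std_nodup he c.length)
      have h2 := hR.subst _ hcv h1
      have h3 : (v.map fun x => if _ : x ∈ c then [e (c.idxOf x)] else [x]).flatten
          = List.ofFn fun i : Fin v.length => e (c.idxOf (v.get i)) := by
        rw [map_eq_ofFn v]
        have hc : (fun j : Fin v.length =>
              if _ : v.get j ∈ c then [e (c.idxOf (v.get j))] else [v.get j])
            = fun i : Fin v.length => [e (c.idxOf (v.get i))] := by
          funext i
          rw [dif_pos (hR.mem hcv _ (List.get_mem v i))]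
        rw [hc, flatten_singletons]
      rw [h3] at h2
      exact h2
    · conv_lhs => rw [← List.ofFn_get v]
      apply congrArg List.ofFn
      funext i
      exact (List.idxOf_get _).symm
/-- `R ↦ Δ_R` is a bijection from context structures on an infinite set `V` to structure
categories, with inverse `Δ ↦ R_Δ`. -/
theorem stmt_13 (V : Type) [Infinite V] (e : ℕ → V) (he : Function.Injective e) :
    (∀ R : List V → List V → Prop, IsCtxStruct R →
      IsStructCat (toCat e R) ∧ toCtx (toCat e R) = R) ∧
    (∀ Δ : ∀ m n : ℕ, Set (Fin m → Fin n), IsStructCat Δ →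
      IsCtxStruct (toCtx (V := V) Δ) ∧ toCat e (toCtx (V := V) Δ) = Δ) := by
  constructor
  · intro R hR
    exact ⟨catStruct_of_ctx e he R hR, toCtx_toCat e he R hR⟩
  · intro Δ hΔ
    exact ⟨ctxStruct_of_cat Δ hΔ, toCat_toCtx e he Δ hΔ⟩
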